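/- arXiv:2304.04206 — 7 statements merged into one kernel-verified Lean document; each statement's English description precedes it below -/
import Mathlib

section
/- Every nontrivial commutative semiring R (with 0 ≠ 1) contains a minimal k-prime ideal, i.e., the set of k-prime ideals of R, ordered by inclusion, has a minimal element. -/
/-!
Zorn's lemma applied downwards to the k-prime ideals: the intersection of a chain of k-prime
ideals is again k-prime, so it remains to see that a k-prime ideal exists at all. A maximal
proper k-ideal `P` (Zorn upwards from `⊥`, using that `⊤` is a compact ideal) is even prime: if
`a * b ∈ P` and `a ∉ P`, then `{x | x * b ∈ P}` is a k-ideal strictly containing `P`, hence it is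
`⊤` and `b ∈ P`.
-/

variable {R : Type*} [CommSemiring R]

/-- An ideal `I` of a commutative semiring is a *k-ideal* (subtractive ideal) if
`a ∈ I` and `a + b ∈ I` imply `b ∈ I`. -/
def IsKIdeal (I : Ideal R) : Prop :=
  ∀ a b : R, a ∈ I → a + b ∈ I → b ∈ I

/-- A *k-prime* ideal: a proper k-ideal `P` such that for all k-ideals `I`, `J`,
`I * J ≤ P` implies `I ≤ P` or `J ≤ P`. -/
def IsKPrime (P : Ideal R) : Prop :=
  IsKIdeal P ∧ P ≠ ⊤ ∧
    ∀ I J : Ideal R, IsKIdeal I → IsKIdeal J → I * J ≤ P → I ≤ P ∨ J ≤ P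

theorem isKIdeal_bot : IsKIdeal (⊥ : Ideal R) := by
  intro a b ha hab
  rw [Ideal.mem_bot] at ha hab ⊢
  simpa [ha] using hab

theorem isKIdeal_sInf {S : Set (Ideal R)} (hS : ∀ I ∈ S, IsKIdeal I) : IsKIdeal (sInf S) := by
  intro a b ha hab
  rw [Submodule.mem_sInf] at ha hab ⊢
  exact fun I hI => hS I hI a b (ha I hI) (hab I hI)

theorem IsChain.isKIdeal_sSup {c : Set (Ideal R)} (hc : IsChain (· ≤ ·) c)
    (hk : ∀ I ∈ c, IsKIdeal I) : IsKIdeal (sSup c) := by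
  rcases c.eq_empty_or_nonempty with rfl | hne
  · simpa using isKIdeal_bot
  intro a b ha hab
  rw [Submodule.mem_sSup_of_directed hne hc.directedOn] at ha hab
  obtain ⟨I, hI, haI⟩ := ha
  obtain ⟨J, hJ, habJ⟩ := hab
  obtain ⟨K, hK, hIK, hJK⟩ := hc.directedOn I hI J hJ
  exact le_sSup hK (hk K hK a b (hIK haI) (hJK habJ))

theorem IsKIdeal.colon {P : Ideal R} (hP : IsKIdeal P) (S : Set R) : IsKIdeal (P.colon S) := by
  intro a b ha hab
  rw [Submodule.mem_colon] at ha hab ⊢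
  exact fun s hs => hP _ _ (ha s hs) (by simpa only [add_smul] using hab s hs)

theorem IsKIdeal.isKPrime_of_isPrime {P : Ideal R} (hk : IsKIdeal P) (hP : P.IsPrime) :
    IsKPrime P :=
  ⟨hk, hP.ne_top, fun _ _ _ _ h => hP.mul_le.1 h⟩

theorem isPrime_of_maximal_isKIdeal {P : Ideal R}
    (hP : Maximal (fun I : Ideal R => IsKIdeal I ∧ I ≠ ⊤) P) : P.IsPrime := by
  obtain ⟨⟨hk, hne⟩, hmax⟩ := hP
  refine Ideal.isPrime_iff.2 ⟨hne, fun {a b} hab => or_iff_not_imp_left.2 fun ha => ?_⟩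
  have hcolon : P.colon {b} = ⊤ := by
    by_contra hne'
    exact ha (hmax ⟨hk.colon {b}, hne'⟩ Ideal.le_colon (Submodule.mem_colon_singleton.2 hab))
  simpa using (Submodule.colon_eq_top_iff_subset _).1 hcolon

theorem IsChain.sSup_ne_top {c : Set (Ideal R)} (hc : IsChain (· ≤ ·) c) (hne : c.Nonempty)
    (hproper : ∀ I ∈ c, I ≠ ⊤) : sSup c ≠ ⊤ :=
  (CompleteLattice.IsCompactElement.directed_sSup_lt_of_lt Ideal.isCompactElement_top hne
    hc.directedOn fun I hI => lt_top_iff_ne_top.2 (hproper I hI)).ne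

theorem exists_maximal_isKIdeal_ne_top [Nontrivial R] :
    ∃ P : Ideal R, Maximal (fun I => IsKIdeal I ∧ I ≠ ⊤) P := by
  obtain ⟨P, -, hP⟩ := zorn_le_nonempty₀ {I : Ideal R | IsKIdeal I ∧ I ≠ ⊤}
    (fun c hcS hc I hI => ⟨sSup c, ⟨hc.isKIdeal_sSup fun J hJ => (hcS hJ).1,
      hc.sSup_ne_top ⟨I, hI⟩ fun J hJ => (hcS hJ).2⟩, fun _ => le_sSup⟩)
    ⊥ ⟨isKIdeal_bot, bot_ne_top⟩
  exact ⟨P, hP⟩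

theorem exists_isKPrime [Nontrivial R] : ∃ P : Ideal R, IsKPrime P := by
  obtain ⟨P, hP⟩ := exists_maximal_isKIdeal_ne_top (R := R)
  exact ⟨P, hP.prop.1.isKPrime_of_isPrime (isPrime_of_maximal_isKIdeal hP)⟩

theorem IsChain.isKPrime_sInf {c : Set (Ideal R)} (hc : IsChain (· ≤ ·) c) (hne : c.Nonempty)
    (hk : ∀ P ∈ c, IsKPrime P) : IsKPrime (sInf c) := by
  obtain ⟨P₀, hP₀⟩ := hne
  refine ⟨isKIdeal_sInf fun P hP => (hk P hP).1,
    fun htop => (hk P₀ hP₀).2.1 (top_le_iff.1 (htop ▸ sInf_le hP₀)), fun I J hI hJ hIJ => ?_⟩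
  refine or_iff_not_imp_left.2 fun hIc => le_sInf fun Q hQ => ?_
  obtain ⟨P, hPc, hIP⟩ : ∃ P ∈ c, ¬ I ≤ P := by simpa [le_sInf_iff] using hIc
  have hmem : ∀ {Q}, Q ∈ c → I ≤ Q ∨ J ≤ Q :=
    fun hQ => (hk _ hQ).2.2 I J hI hJ (hIJ.trans (sInf_le hQ))
  have hJP : J ≤ P := (hmem hPc).resolve_left hIP
  rcases hc.total hPc hQ with hPQ | hQP
  · exact hJP.trans hPQ
  · exact (hmem hQ).resolve_left fun hIQ => hIP (hIQ.trans hQP)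

theorem exists_minimal_isKPrime_le {P₀ : Ideal R} (hP₀ : IsKPrime P₀) :
    ∃ P ≤ P₀, Minimal IsKPrime P := by
  -- Zorn in `(Ideal R)ᵒᵈ`, where the upper bound `sSup c` of a chain is its intersection `sInf c`.
  obtain ⟨P, hP, hmin⟩ := zorn_le_nonempty₀ (α := (Ideal R)ᵒᵈ) {P | IsKPrime (OrderDual.ofDual P)}
    (fun c hcS hc I hI => ⟨sSup c, hc.symm.isKPrime_sInf ⟨I, hI⟩ hcS, fun _ => le_sSup⟩)
    (OrderDual.toDual P₀) hP₀
  exact ⟨P, hP, hmin⟩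

/-- Every nontrivial commutative semiring contains a minimal k-prime ideal. -/
theorem exists_minimal_kPrime (R : Type*) [CommSemiring R] [Nontrivial R] :
    ∃ P : Ideal R, IsKPrime P ∧ ∀ Q : Ideal R, IsKPrime Q → Q ≤ P → Q = P := by
  obtain ⟨P₀, hP₀⟩ := exists_isKPrime (R := R)
  obtain ⟨P, -, hP⟩ := exists_minimal_isKPrime_le hP₀
  exact ⟨P, hP.prop, fun Q hQ hQP => hP.eq_of_le hQ hQP⟩
end

section
/- For a proper k-ideal P of a commutative semiring R, the following are equivalent: (1) for all x, y ∈ R, xy ∈ P implies x ∈ P or y ∈ P; (2) for all k-ideals I, J of R, IJ ⊆ P implies I ⊆ P or J ⊆ P. -/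
/-!
If `P` is a k-ideal and `I * J ≤ P`, then also `kClosure I * J ≤ P`, where the k-closure
`kClosure I = {a | ∃ b ∈ I, a + b ∈ I}` is a k-ideal containing `I`: for `a + b, b ∈ I`
and `c ∈ J`, both `b * c` and `b * c + a * c` lie in `P`, hence so does `a * c`. Given
`x * y ∈ P`, apply the idealwise condition to the k-closures of `(x)` and `(y)`, whose product
therefore lies in `P` together with `(x) * (y) = (x * y)`.
-/

variable {R : Type*} [CommSemiring R]

namespace Ideal

def kClosure (I : Ideal R) : Ideal R where
  carrier := {a | ∃ b ∈ I, a + b ∈ I}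
  zero_mem' := ⟨0, I.zero_mem, by simp⟩
  add_mem' := by
    rintro a c ⟨b, hb, hab⟩ ⟨d, hd, hcd⟩
    refine ⟨b + d, I.add_mem hb hd, ?_⟩
    rw [add_add_add_comm]
    exact I.add_mem hab hcd
  smul_mem' := by
    rintro r a ⟨b, hb, hab⟩
    refine ⟨r * b, I.mul_mem_left r hb, ?_⟩
    rw [smul_eq_mul, ← mul_add]
    exact I.mul_mem_left r hab

theorem kClosure_isKIdeal (I : Ideal R) : IsKIdeal (kClosure I) := by
  rintro a b ⟨c, hc, hac⟩ ⟨d, hd, habd⟩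
  refine ⟨a + c + d, I.add_mem hac hd, ?_⟩
  have : b + (a + c + d) = a + b + d + c := by ring
  rw [this]
  exact I.add_mem habd hc

theorem le_kClosure (I : Ideal R) : I ≤ kClosure I :=
  fun x hx => ⟨0, I.zero_mem, by simpa using hx⟩

theorem kClosure_mul_le {I J P : Ideal R} (hP : IsKIdeal P) (h : I * J ≤ P) :
    kClosure I * J ≤ P := by
  rw [mul_le] at h ⊢
  rintro a ⟨b, hb, hab⟩ c hc
  refine hP (b * c) (a * c) (h b hb c hc) ?_
  rw [← add_mul, add_comm]
  exact h _ hab c hc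

theorem kClosure_mul_kClosure_le {I J P : Ideal R} (hP : IsKIdeal P) (h : I * J ≤ P) :
    kClosure I * kClosure J ≤ P := by
  refine kClosure_mul_le hP ?_
  rw [Ideal.mul_comm] at h ⊢
  exact kClosure_mul_le hP h

end Ideal

theorem kPrime_elementwise_iff_general (P : Ideal R) (hP : IsKIdeal P) :
    (∀ x y : R, x * y ∈ P → x ∈ P ∨ y ∈ P) ↔
      (∀ I J : Ideal R, IsKIdeal I → IsKIdeal J → I * J ≤ P → I ≤ P ∨ J ≤ P) := by
  constructor
  · intro hprime I J _ _ hIJ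
    by_contra! h
    obtain ⟨x, hxI, hxP⟩ := SetLike.not_le_iff_exists.mp h.1
    obtain ⟨y, hyJ, hyP⟩ := SetLike.not_le_iff_exists.mp h.2
    exact (hprime x y (hIJ (Ideal.mul_mem_mul hxI hyJ))).elim hxP hyP
  · intro hideal x y hxy
    have hspan : Ideal.span {x} * Ideal.span {y} ≤ P := by
      rwa [Ideal.span_singleton_mul_span_singleton, Ideal.span_singleton_le_iff_mem]
    refine (hideal _ _ (Ideal.kClosure_isKIdeal _) (Ideal.kClosure_isKIdeal _)
      (Ideal.kClosure_mul_kClosure_le hP hspan)).imp (fun h => ?_) (fun h => ?_)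
    · exact h (Ideal.le_kClosure _ (Ideal.mem_span_singleton_self x))
    · exact h (Ideal.le_kClosure _ (Ideal.mem_span_singleton_self y))

/-- For a proper k-ideal `P`, the elementwise primeness condition is equivalent to
the idealwise primeness condition for k-ideals. -/
theorem kPrime_elementwise_iff (P : Ideal R) (hP : IsKIdeal P) (hproper : P ≠ ⊤) :
    (∀ x y : R, x * y ∈ P → x ∈ P ∨ y ∈ P) ↔
      (∀ I J : Ideal R, IsKIdeal I → IsKIdeal J → I * J ≤ P → I ≤ P ∨ J ≤ P) :=
  kPrime_elementwise_iff_general P hP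
end

section
/- (Prime avoidance for k-ideals) Let R be a commutative semiring, let I be a nonempty subset of R closed under addition and multiplication, and let P_1, ..., P_n be k-ideals of R such that P_3, ..., P_n are k-prime. If I is not contained in P_j for every j = 1, ..., n, then there exists x ∈ I such that x ∉ P_j for all j. -/
/-!
A k-prime ideal is prime in the usual elementwise sense: if `a * b ∈ P`, the smallest k-ideals
containing `a` and `b` have product inside `P`. Avoidance then follows the classical argument,
by induction on the number of ideals. For each `j` the induction hypothesis gives `x j ∈ S`
outside every `P i` with `i ≠ j`; if no such `x j` already works, then `x j ∈ P j` for all `j`.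
With `L` a prime index, `z = ∏_{i ≠ L} x i` lies in every `P i` with `i ≠ L` but not in `P L`
(with only two ideals take `z` the other `x`), and `x L + z` avoids every `P i` because each
`P i` is a k-ideal.
-/

variable {R : Type*} [CommSemiring R]

open Finset

/-- The k-closure of the principal ideal `R a`, the smallest k-ideal containing `a`. -/
def kSpan (a : R) : Ideal R where
  carrier := {x | ∃ r s : R, x + r * a = s * a}
  zero_mem' := ⟨0, 0, by simp⟩
  add_mem' := by
    rintro x y ⟨r, s, h⟩ ⟨r', s', h'⟩
    exact ⟨r + r', s + s', by rw [add_mul, add_mul, ← h, ← h']; ring⟩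
  smul_mem' := by
    rintro c x ⟨r, s, h⟩
    exact ⟨c * r, c * s, by rw [smul_eq_mul, mul_assoc, mul_assoc, ← h]; ring⟩

theorem mem_kSpan_self (a : R) : a ∈ kSpan a := ⟨0, 1, by ring⟩

theorem isKIdeal_kSpan (a : R) : IsKIdeal (kSpan a) := by
  rintro x y ⟨r, s, h⟩ ⟨r', s', h'⟩
  refine ⟨r' + s, s' + r, ?_⟩
  calc y + (r' + s) * a = x + y + r' * a + r * a := by rw [add_mul, ← h]; ring
    _ = (s' + r) * a := by rw [h', add_mul]

theorem kSpan_le {I : Ideal R} (hI : IsKIdeal I) {a : R} (ha : a ∈ I) : kSpan a ≤ I := by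
  rintro x ⟨r, s, h⟩
  exact hI _ _ (I.mul_mem_left r ha) (by rw [add_comm, h]; exact I.mul_mem_left s ha)

theorem mul_mem_kSpan_mul {a x : R} (hx : x ∈ kSpan a) (c : R) : x * c ∈ kSpan (a * c) := by
  obtain ⟨r, s, h⟩ := hx
  exact ⟨r, s, by rw [← mul_assoc, ← mul_assoc, ← add_mul, h]⟩

theorem kSpan_mul_kSpan_le (a b : R) : kSpan a * kSpan b ≤ kSpan (a * b) := by
  refine Ideal.mul_le.2 fun x hx y hy => ?_
  have hxy : x * y ∈ kSpan (x * b) := by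
    simpa only [mul_comm x] using mul_mem_kSpan_mul hy x
  exact kSpan_le (isKIdeal_kSpan _) (mul_mem_kSpan_mul hx b) hxy

theorem IsKPrime.isPrime {P : Ideal R} (hP : IsKPrime P) : P.IsPrime where
  ne_top' := hP.2.1
  mem_or_mem' {a b} hab :=
    (hP.2.2 _ _ (isKIdeal_kSpan a) (isKIdeal_kSpan b)
      ((kSpan_mul_kSpan_le a b).trans (kSpan_le hP.1 hab))).imp
      (· (mem_kSpan_self a)) (· (mem_kSpan_self b))

theorem IsKIdeal.add_mem_iff_right {I : Ideal R} (hI : IsKIdeal I) {a b : R} (ha : a ∈ I) :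
    a + b ∈ I ↔ b ∈ I :=
  ⟨hI a b ha, I.add_mem ha⟩

theorem IsKIdeal.add_mem_iff_left {I : Ideal R} (hI : IsKIdeal I) {a b : R} (hb : b ∈ I) :
    a + b ∈ I ↔ a ∈ I := by
  rw [add_comm, hI.add_mem_iff_right hb]

section Avoidance

variable {ι : Type*} [DecidableEq ι] {S : Set R} {P : ι → Ideal R} {s T : Finset ι}

theorem exists_notMem_forall_mem_of_separating (hmul : ∀ a ∈ S, ∀ b ∈ S, a * b ∈ S)
    (hT : #T ≤ 2) (hp : ∀ i ∈ s, i ∉ T → (P i).IsPrime) (hns : ∀ i ∈ s, ¬ S ⊆ P i)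
    (hs : s.Nonempty) {x : ι → R} (hxS : ∀ i ∈ s, x i ∈ S)
    (hx : ∀ j ∈ s, ∀ i ∈ s, i ≠ j → x j ∉ P i) (hxP : ∀ i ∈ s, x i ∈ P i) :
    ∃ L ∈ s, ∃ z ∈ S, z ∉ P L ∧ ∀ i ∈ s, i ≠ L → z ∈ P i := by
  obtain hs1 | hs2 | hs3 : #s = 1 ∨ #s = 2 ∨ 3 ≤ #s := by
    have := hs.card_pos; omega
  · obtain ⟨L, rfl⟩ := card_eq_one.1 hs1
    obtain ⟨z, hzS, hzL⟩ := Set.not_subset.1 (hns L (mem_singleton_self L))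
    exact ⟨L, mem_singleton_self L, z, hzS, hzL, by simp⟩
  · obtain ⟨L, M, hLM, rfl⟩ := card_eq_two.1 hs2
    refine ⟨L, by simp, x M, hxS M (by simp), hx M (by simp) L (by simp) hLM, ?_⟩
    intro i hi hiL
    obtain rfl : i = M := by simpa [hiL] using hi
    exact hxP i (by simp)
  · obtain ⟨L, hL, hLT⟩ := exists_mem_notMem_of_card_lt_card (by omega : #T < #s)
    have := hp L hL hLT
    refine ⟨L, hL, ∏ i ∈ s.erase L, x i, ?_, ?_, ?_⟩
    · refine prod_induction_nonempty _ (· ∈ S) (fun a b ha hb => hmul a ha b hb) ?_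
        fun i hi => hxS i (mem_of_mem_erase hi)
      rw [← card_pos, card_erase_of_mem hL]
      omega
    · rw [Ideal.IsPrime.prod_mem_iff]
      rintro ⟨i, hi, hxi⟩
      exact hx i (mem_of_mem_erase hi) L hL (ne_of_mem_erase hi).symm hxi
    · intro i hi hiL
      exact Ideal.prod_mem _ (mem_erase.2 ⟨hiL, hi⟩) (hxP i hi)

theorem exists_mem_forall_notMem_of_isKIdeal (hS : S.Nonempty)
    (hadd : ∀ a ∈ S, ∀ b ∈ S, a + b ∈ S) (hmul : ∀ a ∈ S, ∀ b ∈ S, a * b ∈ S)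
    (hT : #T ≤ 2) (hk : ∀ i ∈ s, IsKIdeal (P i))
    (hp : ∀ i ∈ s, i ∉ T → IsKPrime (P i)) (hns : ∀ i ∈ s, ¬ S ⊆ P i) :
    ∃ y ∈ S, ∀ i ∈ s, y ∉ P i := by
  induction s using Finset.strongInduction with | H s ih =>
  have hsep : ∀ j ∈ s, ∃ x ∈ S, ∀ i ∈ s, i ≠ j → x ∉ P i := by
    intro j hj
    obtain ⟨x, hxS, hx⟩ := ih (s.erase j) (erase_ssubset hj)
      (fun i hi => hk i (mem_of_mem_erase hi)) (fun i hi => hp i (mem_of_mem_erase hi))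
      (fun i hi => hns i (mem_of_mem_erase hi))
    exact ⟨x, hxS, fun i hi hij => hx i (mem_erase.2 ⟨hij, hi⟩)⟩
  choose! x hxS hx using hsep
  by_contra! hcover
  have hxP : ∀ j ∈ s, x j ∈ P j := by
    intro j hj
    obtain ⟨i, hi, hxi⟩ := hcover (x j) (hxS j hj)
    obtain rfl : i = j := by_contra fun hij => hx j hj i hi hij hxi
    exact hxi
  have hs : s.Nonempty := by
    obtain ⟨y, hy⟩ := hS
    obtain ⟨i, hi, -⟩ := hcover y hy
    exact ⟨i, hi⟩
  obtain ⟨L, hL, z, hzS, hzL, hz⟩ := exists_notMem_forall_mem_of_separating hmul hT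
    (fun i hi hiT => (hp i hi hiT).isPrime) hns hs hxS hx hxP
  obtain ⟨i, hi, hmem⟩ := hcover _ (hadd _ (hxS L hL) _ hzS)
  by_cases hiL : i = L
  · subst hiL
    exact hzL (((hk i hi).add_mem_iff_right (hxP i hi)).1 hmem)
  · exact hx L hL i hi hiL (((hk i hi).add_mem_iff_left (hz i hi hiL)).1 hmem)

end Avoidance

/-- Prime avoidance for k-ideals: if `S` is a nonempty subset of `R` closed under
addition and multiplication, and `P 0, …, P (n-1)` are k-ideals, all but possibly the
first two of which are k-prime, and `S` is not contained in any `P i`, then there is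
`x ∈ S` avoiding every `P i`. -/
theorem kPrime_avoidance (n : ℕ) (S : Set R) (hS : S.Nonempty)
    (hadd : ∀ a ∈ S, ∀ b ∈ S, a + b ∈ S) (hmul : ∀ a ∈ S, ∀ b ∈ S, a * b ∈ S)
    (P : Fin n → Ideal R) (hk : ∀ i, IsKIdeal (P i))
    (hprime : ∀ i : Fin n, 2 ≤ (i : ℕ) → IsKPrime (P i))
    (hns : ∀ i, ¬ S ⊆ (P i : Set R)) :
    ∃ x ∈ S, ∀ i, x ∉ P i := by
  have hT : #{i : Fin n | (i : ℕ) < 2} ≤ 2 := by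
    rw [Fin.card_filter_val_lt]
    exact min_le_right n 2
  obtain ⟨x, hxS, hx⟩ := exists_mem_forall_notMem_of_isKIdeal hS hadd hmul hT
    (fun i _ => hk i) (fun i _ hi => hprime i (by simp at hi; omega)) (fun i _ => hns i)
  exact ⟨x, hxS, fun i => hx i (mem_univ i)⟩
end

section
/- For k-ideals I and J of a commutative semiring R, the intersection of all k-prime ideals containing the ideal product IJ equals the intersection of all k-prime ideals containing I ∩ J, and both equal R_k(I) ∩ R_k(J). -/
variable {R : Type*} [CommSemiring R]

/-- The *k-radical* of an ideal: the intersection of all k-prime ideals containing it. -/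
def kRadical (I : Ideal R) : Ideal R :=
  sInf {P : Ideal R | IsKPrime P ∧ I ≤ P}

/-!
A k-prime ideal `P` contains `I * J`, equivalently `I ⊓ J`, exactly when it contains `I` or `J`
(for k-ideals `I`, `J`). Hence the k-prime ideals over `I * J` and over `I ⊓ J` both form the
union of those over `I` and those over `J`, and the infimum of a union is the meet of the infima.
-/

namespace IsKPrime

variable {P I J : Ideal R}

theorem mul_le_iff (hP : IsKPrime P) (hI : IsKIdeal I) (hJ : IsKIdeal J) :
    I * J ≤ P ↔ I ≤ P ∨ J ≤ P :=
  ⟨hP.2.2 I J hI hJ, fun h => h.elim (Ideal.mul_le_left.trans ·) (Ideal.mul_le_right.trans ·)⟩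

theorem inf_le_iff (hP : IsKPrime P) (hI : IsKIdeal I) (hJ : IsKIdeal J) :
    I ⊓ J ≤ P ↔ I ≤ P ∨ J ≤ P :=
  ⟨fun h => (hP.mul_le_iff hI hJ).1 (Ideal.mul_le_inf.trans h),
    fun h => h.elim inf_le_of_left_le inf_le_of_right_le⟩

end IsKPrime

theorem sInf_isKPrime_eq_kRadical_inf {I J K : Ideal R}
    (hK : ∀ P, IsKPrime P → (K ≤ P ↔ I ≤ P ∨ J ≤ P)) :
    sInf {P : Ideal R | IsKPrime P ∧ K ≤ P} = kRadical I ⊓ kRadical J := by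
  have hunion : {P : Ideal R | IsKPrime P ∧ K ≤ P} =
      {P | IsKPrime P ∧ I ≤ P} ∪ {P | IsKPrime P ∧ J ≤ P} := by
    ext P
    simp only [Set.mem_ofPred_eq, Set.mem_union, ← and_or_left]
    exact and_congr_right (hK P)
  rw [hunion, sInf_union, kRadical, kRadical]

/-- For k-ideals `I`, `J`: the intersection of all k-prime ideals containing `I * J`
equals the intersection of all k-prime ideals containing `I ⊓ J`, and both equal
`kRadical I ⊓ kRadical J`. -/
theorem kRadical_mul_inf (I J : Ideal R) (hI : IsKIdeal I) (hJ : IsKIdeal J) :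
    sInf {P : Ideal R | IsKPrime P ∧ I * J ≤ P} =
        sInf {P : Ideal R | IsKPrime P ∧ I ⊓ J ≤ P} ∧
      sInf {P : Ideal R | IsKPrime P ∧ I * J ≤ P} = kRadical I ⊓ kRadical J := by
  have hmul := sInf_isKPrime_eq_kRadical_inf fun P hP => hP.mul_le_iff hI hJ
  have hinf := sInf_isKPrime_eq_kRadical_inf fun P hP => hP.inf_le_iff hI hJ
  exact ⟨hmul.trans hinf.symm, hmul⟩
end

section
/- If I is a proper k-ideal of a commutative semiring R, then I equals the intersection of all k-irreducible ideals of R that contain I. -/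
/-!
For `a ∉ I`, Zorn's lemma gives a k-ideal `M ⊇ I` maximal among the k-ideals avoiding `a`.
Such an `M` is k-irreducible: if `M = J ⊓ K` with `J, K` k-ideals strictly above `M`, maximality
puts `a` in both `J` and `K`, hence in `M`. So `a` is not in the intersection of the k-irreducible
ideals containing `I`.
-/

variable {R : Type*} [CommSemiring R]

/-- A *k-irreducible* ideal: a k-ideal `I` such that for all k-ideals `J`, `K`,
`J ⊓ K = I` implies `J = I` or `K = I`. -/
def IsKIrreducible (I : Ideal R) : Prop :=
  IsKIdeal I ∧ ∀ J K : Ideal R, IsKIdeal J → IsKIdeal K → J ⊓ K = I → J = I ∨ K = I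

theorem isKIdeal_sSup_of_directedOn {c : Set (Ideal R)} (hc : ∀ J ∈ c, IsKIdeal J)
    (hne : c.Nonempty) (hdir : DirectedOn (· ≤ ·) c) : IsKIdeal (sSup c) := by
  intro a b ha hab
  obtain ⟨J₁, hJ₁, ha₁⟩ := (Submodule.mem_sSup_of_directed hne hdir).mp ha
  obtain ⟨J₂, hJ₂, hab₂⟩ := (Submodule.mem_sSup_of_directed hne hdir).mp hab
  obtain ⟨J, hJ, h₁, h₂⟩ := hdir J₁ hJ₁ J₂ hJ₂
  exact le_sSup hJ (hc J hJ a b (h₁ ha₁) (h₂ hab₂))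

theorem IsKIdeal.exists_le_maximal_notMem {I : Ideal R} (hI : IsKIdeal I) {a : R} (ha : a ∉ I) :
    ∃ M, I ≤ M ∧ Maximal (fun J : Ideal R => IsKIdeal J ∧ a ∉ J) M := by
  refine zorn_le_nonempty₀ _ (fun c hcS hchain J hJ => ?_) I ⟨hI, ha⟩
  have hdir := hchain.directedOn
  refine ⟨sSup c, ⟨isKIdeal_sSup_of_directedOn (fun K hK => (hcS hK).1) ⟨J, hJ⟩ hdir, ?_⟩,
    fun K hK => le_sSup hK⟩
  intro haSup
  obtain ⟨K, hK, haK⟩ := (Submodule.mem_sSup_of_directed ⟨J, hJ⟩ hdir).mp haSup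
  exact (hcS hK).2 haK

theorem Maximal.isKIrreducible {a : R} {M : Ideal R}
    (hM : Maximal (fun J : Ideal R => IsKIdeal J ∧ a ∉ J) M) : IsKIrreducible M := by
  refine ⟨hM.1.1, fun J K hJ hK hJK => ?_⟩
  by_contra! hne
  have mem_of_ne {L : Ideal R} (hL : IsKIdeal L) (hML : M ≤ L) (hLM : M ≠ L) : a ∈ L := by
    by_contra haL
    exact hLM (hM.eq_of_le ⟨hL, haL⟩ hML)
  have haJ := mem_of_ne hJ (hJK ▸ inf_le_left) (Ne.symm hne.1)
  have haK := mem_of_ne hK (hJK ▸ inf_le_right) (Ne.symm hne.2)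
  exact hM.1.2 (hJK ▸ Submodule.mem_inf.mpr ⟨haJ, haK⟩)

theorem kIdeal_eq_sInf_kIrreducible_general (I : Ideal R) (hI : IsKIdeal I) :
    I = sInf {J : Ideal R | IsKIrreducible J ∧ I ≤ J} := by
  refine le_antisymm (le_sInf fun J hJ => hJ.2) fun a ha => ?_
  by_contra haI
  obtain ⟨M, hIM, hM⟩ := hI.exists_le_maximal_notMem haI
  exact hM.1.2 (Submodule.mem_sInf.mp ha M ⟨hM.isKIrreducible, hIM⟩)

/-- Every proper k-ideal is the intersection of all k-irreducible ideals containing it. -/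
theorem kIdeal_eq_sInf_kIrreducible (I : Ideal R) (hI : IsKIdeal I) (hproper : I ≠ ⊤) :
    I = sInf {J : Ideal R | IsKIrreducible J ∧ I ≤ J} :=
  kIdeal_eq_sInf_kIrreducible_general I hI
end

section
/- If R is a weakly Noetherian commutative semiring, then every k-ideal of R can be represented as an intersection of finitely many k-irreducible k-ideals of R. -/
variable {R : Type*} [CommSemiring R]

/-- A commutative semiring is *weakly Noetherian* if every ascending chain of
k-ideals stabilizes. -/
def WeaklyNoetherian (R : Type*) [CommSemiring R] : Prop :=
  ∀ f : ℕ → Ideal R, (∀ n, IsKIdeal (f n)) → Monotone f →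
    ∃ N : ℕ, ∀ n : ℕ, N ≤ n → f n = f N

/-! The ascending chain condition on k-ideals allows well-founded induction on k-ideals with
respect to reverse inclusion. A k-irreducible k-ideal is its own decomposition; any other
k-ideal `I` is `J ⊓ K` with k-ideals `J, K` strictly above `I`, and concatenating their
decompositions decomposes `I`. -/

def HasKIrreducibleDecomposition (I : Ideal R) : Prop :=
  ∃ s : Finset (Ideal R), s.Nonempty ∧ (∀ J ∈ s, IsKIrreducible J) ∧ I = s.inf id

theorem IsKIrreducible.hasKIrreducibleDecomposition {I : Ideal R} (hI : IsKIrreducible I) :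
    HasKIrreducibleDecomposition I :=
  ⟨{I}, Finset.singleton_nonempty I, by simpa using hI, by simp⟩

theorem HasKIrreducibleDecomposition.inf {J K : Ideal R} (hJ : HasKIrreducibleDecomposition J)
    (hK : HasKIrreducibleDecomposition K) : HasKIrreducibleDecomposition (J ⊓ K) := by
  classical
  obtain ⟨s, hs, hsirr, rfl⟩ := hJ
  obtain ⟨t, -, htirr, rfl⟩ := hK
  refine ⟨s ∪ t, hs.mono Finset.subset_union_left, fun L hL => ?_, Finset.inf_union.symm⟩
  rcases Finset.mem_union.mp hL with hL | hL
  exacts [hsirr L hL, htirr L hL]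

theorem IsKIdeal.exists_lt_lt_inf_eq_of_not_isKIrreducible {I : Ideal R} (hI : IsKIdeal I)
    (hirr : ¬ IsKIrreducible I) :
    ∃ J K : Ideal R, IsKIdeal J ∧ IsKIdeal K ∧ I < J ∧ I < K ∧ J ⊓ K = I := by
  simp only [IsKIrreducible, hI, true_and, not_forall, not_or] at hirr
  obtain ⟨J, K, hJ, hK, hJK, hJI, hKI⟩ := hirr
  exact ⟨J, K, hJ, hK, lt_of_le_of_ne (hJK ▸ inf_le_left) (Ne.symm hJI),
    lt_of_le_of_ne (hJK ▸ inf_le_right) (Ne.symm hKI), hJK⟩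

theorem WeaklyNoetherian.wellFoundedGT (h : WeaklyNoetherian R) :
    WellFoundedGT {I : Ideal R // IsKIdeal I} := by
  rw [wellFoundedGT_iff_monotone_chain_condition]
  intro a
  obtain ⟨N, hN⟩ := h (fun n => (a n).1) (fun n => (a n).2) fun m n hmn => a.monotone hmn
  exact ⟨N, fun m hm => Subtype.ext (hN m hm).symm⟩

/-- In a weakly Noetherian commutative semiring, every k-ideal is a finite
intersection of k-irreducible k-ideals. -/
theorem kIdeal_eq_finite_inf_kIrreducible (R : Type*) [CommSemiring R]
    (h : WeaklyNoetherian R) (I : Ideal R) (hI : IsKIdeal I) :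
    ∃ s : Finset (Ideal R), s.Nonempty ∧ (∀ J ∈ s, IsKIrreducible J) ∧
      I = s.inf id := by
  have := h.wellFoundedGT
  suffices ∀ J : {J : Ideal R // IsKIdeal J}, HasKIrreducibleDecomposition J.1 from this ⟨I, hI⟩
  intro J
  induction J using WellFoundedGT.induction with
  | _ J ih =>
    by_cases hirr : IsKIrreducible J.1
    · exact hirr.hasKIrreducibleDecomposition
    · obtain ⟨K, L, hK, hL, hJK, hJL, hKL⟩ := J.2.exists_lt_lt_inf_eq_of_not_isKIrreducible hirr
      exact hKL ▸ (ih ⟨K, hK⟩ hJK).inf (ih ⟨L, hL⟩ hJL)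
end

section
/- A k-ideal P of a commutative semiring R is k-prime if and only if P is both k-semiprime and k-strongly irreducible. -/
/-!
Since `I * J ≤ I ⊓ J` and `(I ⊓ J) * (I ⊓ J) ≤ I * J`, the k-prime condition on products splits
into the k-semiprime condition on squares and the k-strongly irreducible condition on
intersections; the intersection of two k-ideals is again a k-ideal.
-/

variable {R : Type*} [CommSemiring R]

/-- A *k-semiprime* ideal: a proper k-ideal `Q` such that for every k-ideal `I`,
`I * I ≤ Q` implies `I ≤ Q`. -/
def IsKSemiprime (Q : Ideal R) : Prop :=
  IsKIdeal Q ∧ Q ≠ ⊤ ∧ ∀ I : Ideal R, IsKIdeal I → I * I ≤ Q → I ≤ Q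

/-- A *k-strongly irreducible* ideal: a k-ideal `I` such that for all k-ideals `J`, `K`,
`J ⊓ K ≤ I` implies `J ≤ I` or `K ≤ I`. -/
def IsKStronglyIrreducible (I : Ideal R) : Prop :=
  IsKIdeal I ∧ ∀ J K : Ideal R, IsKIdeal J → IsKIdeal K → J ⊓ K ≤ I → J ≤ I ∨ K ≤ I

theorem IsKIdeal.inf {I J : Ideal R} (hI : IsKIdeal I) (hJ : IsKIdeal J) : IsKIdeal (I ⊓ J) :=
  fun a b ha hab => ⟨hI a b ha.1 hab.1, hJ a b ha.2 hab.2⟩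

theorem IsKPrime.isKSemiprime {P : Ideal R} (hP : IsKPrime P) : IsKSemiprime P :=
  ⟨hP.1, hP.2.1, fun I hI hII => (hP.2.2 I I hI hI hII).elim id id⟩

theorem IsKPrime.isKStronglyIrreducible {P : Ideal R} (hP : IsKPrime P) :
    IsKStronglyIrreducible P :=
  ⟨hP.1, fun J K hJ hK hJK => hP.2.2 J K hJ hK (Ideal.mul_le_inf.trans hJK)⟩

theorem IsKSemiprime.isKPrime {P : Ideal R} (hP : IsKSemiprime P)
    (hirr : IsKStronglyIrreducible P) : IsKPrime P := by
  refine ⟨hP.1, hP.2.1, fun I J hI hJ hIJ => hirr.2 I J hI hJ (hP.2.2 _ (hI.inf hJ) ?_)⟩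
  exact (Ideal.mul_mono inf_le_left inf_le_right).trans hIJ

theorem isKPrime_iff_kSemiprime_and_kStronglyIrreducible_general (P : Ideal R) :
    IsKPrime P ↔ IsKSemiprime P ∧ IsKStronglyIrreducible P :=
  ⟨fun h => ⟨h.isKSemiprime, h.isKStronglyIrreducible⟩, fun ⟨hs, hi⟩ => hs.isKPrime hi⟩

/-- A k-ideal `P` is k-prime if and only if it is k-semiprime and
k-strongly irreducible. -/
theorem isKPrime_iff_kSemiprime_and_kStronglyIrreducible (P : Ideal R)
    (hP : IsKIdeal P) :
    IsKPrime P ↔ IsKSemiprime P ∧ IsKStronglyIrreducible P :=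
  isKPrime_iff_kSemiprime_and_kStronglyIrreducible_general P
end
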